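/- Let ⊙ be a non-degenerate pseudo-multiplication on [0,∞]. For an element t ∈ [0,∞], the following conditions are equivalent: (i) t is ⊙-finite; (ii) s ⊙ t is ⊙-finite for some s > 0; (iii) s ⊙ t ≤ 1⊙ for some s > 0; (iv) t ⊙ s' ≤ 1⊙ for some s' > 0; (v) t ⊙ s' is ⊙-finite for some s' > 0. -/

import Mathlib

open scoped ENNReal
open Set

/-- A pseudo-multiplication on `[0,∞]`: associative, monotone in each argument,
continuous on `(0,∞) × [0,∞]`, with `s ↦ s ⊙ t` continuous on `(0,∞]`,
admitting a left identity, without zero divisors, and with `0` as annihilator. -/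
structure PseudoMul where
  op : ℝ≥0∞ → ℝ≥0∞ → ℝ≥0∞
  assoc : ∀ a b c, op (op a b) c = op a (op b c)
  mono_left : ∀ t, Monotone fun s => op s t
  mono_right : ∀ s, Monotone fun t => op s t
  continuousOn : ContinuousOn (fun p : ℝ≥0∞ × ℝ≥0∞ => op p.1 p.2) (Ioo 0 ⊤ ×ˢ univ)
  continuousOn_left : ∀ t, ContinuousOn (fun s => op s t) (Ioi 0)
  one : ℝ≥0∞
  one_op : ∀ t, op one t = t
  no_zero_divisors : ∀ s t, op s t = 0 → s = 0 ∨ t = 0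
  zero_op : ∀ t, op 0 t = 0
  op_zero : ∀ t, op t 0 = 0

/-- An element `t` is `⊙`-finite if `⨅_{s>0} s ⊙ t = 0`. -/
def PseudoMul.OFinite (P : PseudoMul) (t : ℝ≥0∞) : Prop :=
  ⨅ s ∈ Ioi (0 : ℝ≥0∞), P.op s t = 0

/-- `⊙` is non-degenerate if its left identity is `⊙`-finite. -/
def PseudoMul.Nondegenerate (P : PseudoMul) : Prop :=
  P.OFinite P.one

/-!
The left factor in the definition of `⊙`-finiteness can be absorbed: `r ⊙ (s ⊙ t) = (r ⊙ s) ⊙ t`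
shows that (ii) implies (i), and `(⨅ r, r ⊙ t) ⊙ s' ≤ ⨅ r, r ⊙ (t ⊙ s')` together with the absence
of zero divisors shows that (v) implies (i). Non-degeneracy makes everything below `1⊙` finite,
which turns (iii) into (ii) and (iv) into (v). Conversely, a finite `t` has some `s ⊙ t` in
`[0,∞)`, and continuity of `r ↦ (s ⊙ t) ⊙ r = s ⊙ (t ⊙ r)` at `0` yields `t ⊙ r < 1⊙` for small
`r > 0`.
-/

namespace PseudoMul

variable {P : PseudoMul} {a s t : ℝ≥0∞}

lemma one_pos (P : PseudoMul) : 0 < P.one := by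
  refine pos_iff_ne_zero.mpr fun h => one_ne_zero (α := ℝ≥0∞) ?_
  rw [← P.one_op 1, h, P.zero_op]

lemma op_pos (P : PseudoMul) (hs : 0 < s) (ht : 0 < t) : 0 < P.op s t :=
  pos_iff_ne_zero.mpr fun h => (P.no_zero_divisors s t h).elim hs.ne' ht.ne'

lemma oFinite_iff : P.OFinite t ↔ ∀ a, 0 < a → ∃ s, 0 < s ∧ P.op s t < a := by
  simp only [OFinite, ← bot_eq_zero, iInf₂_eq_bot, mem_Ioi, exists_prop]

lemma OFinite.exists_op_lt (h : P.OFinite t) (ha : 0 < a) : ∃ s, 0 < s ∧ P.op s t < a :=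
  oFinite_iff.mp h a ha

lemma OFinite.mono (h : P.OFinite t) (hat : a ≤ t) : P.OFinite a :=
  oFinite_iff.mpr fun _ hb =>
    let ⟨s, hs, hst⟩ := h.exists_op_lt hb
    ⟨s, hs, (P.mono_right s hat).trans_lt hst⟩

lemma Nondegenerate.oFinite_of_le_one (hP : P.Nondegenerate) (ha : a ≤ P.one) : P.OFinite a :=
  OFinite.mono hP ha

lemma OFinite.of_op_left (hs : 0 < s) (h : P.OFinite (P.op s t)) : P.OFinite t := by
  refine oFinite_iff.mpr fun a ha => ?_
  obtain ⟨r, hr, hrst⟩ := h.exists_op_lt ha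
  exact ⟨P.op r s, P.op_pos hr hs, by rwa [P.assoc]⟩

lemma OFinite.of_op_right (hs : 0 < s) (h : P.OFinite (P.op t s)) : P.OFinite t := by
  by_contra hnot
  simp only [oFinite_iff, not_forall, not_exists, not_and, not_lt] at hnot
  obtain ⟨a, ha, hle⟩ := hnot
  obtain ⟨r, hr, hlt⟩ := h.exists_op_lt (P.op_pos ha hs)
  have : P.op a s ≤ P.op r (P.op t s) := by
    rw [← P.assoc]
    exact P.mono_left s (hle r hr)
  exact hlt.not_ge this

lemma continuous_op (P : PseudoMul) (ha : 0 < a) (ha' : a < ⊤) : Continuous (P.op a) :=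
  P.continuousOn.comp_continuous (f := fun r => (a, r)) (by fun_prop) fun _ => ⟨⟨ha, ha'⟩, trivial⟩

lemma exists_op_right_lt (P : PseudoMul) (ha : a < ⊤) {ε : ℝ≥0∞} (hε : 0 < ε) :
    ∃ r, 0 < r ∧ P.op a r < ε := by
  rcases eq_zero_or_pos a with rfl | ha₀
  · exact ⟨1, zero_lt_one, by rwa [P.zero_op]⟩
  have hlim : Filter.Tendsto (P.op a) (nhdsWithin 0 (Ioi 0)) (nhds 0) := by
    simpa only [P.op_zero] using ((P.continuous_op ha₀ ha).tendsto 0).mono_left nhdsWithin_le_nhds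
  obtain ⟨r, hr, hpos⟩ :=
    ((hlim.eventually_lt_const hε).and self_mem_nhdsWithin).exists
  exact ⟨r, hpos, hr⟩

lemma OFinite.exists_op_right_lt_one (h : P.OFinite t) : ∃ r, 0 < r ∧ P.op t r < P.one := by
  obtain ⟨s, hs, hst⟩ := h.exists_op_lt ENNReal.zero_lt_top
  obtain ⟨r, hr, hlt⟩ := P.exists_op_right_lt hst (P.op_pos hs P.one_pos)
  rw [P.assoc] at hlt
  exact ⟨r, hr, (P.mono_right s).reflect_lt hlt⟩

end PseudoMul

/-- Characterizations of `⊙`-finiteness for a non-degenerate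
pseudo-multiplication. -/
theorem ofinite_tfae (P : PseudoMul) (hP : P.Nondegenerate) (t : ℝ≥0∞) :
    [P.OFinite t,
      ∃ s : ℝ≥0∞, 0 < s ∧ P.OFinite (P.op s t),
      ∃ s : ℝ≥0∞, 0 < s ∧ P.op s t ≤ P.one,
      ∃ s' : ℝ≥0∞, 0 < s' ∧ P.op t s' ≤ P.one,
      ∃ s' : ℝ≥0∞, 0 < s' ∧ P.OFinite (P.op t s')].TFAE := by
  tfae_have 1 → 2 := fun h => ⟨P.one, P.one_pos, by rwa [P.one_op]⟩
  tfae_have 2 → 1 := fun ⟨s, hs, h⟩ => h.of_op_left hs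
  tfae_have 1 → 3 := fun h =>
    let ⟨s, hs, hlt⟩ := h.exists_op_lt P.one_pos
    ⟨s, hs, hlt.le⟩
  tfae_have 3 → 2 := fun ⟨s, hs, hle⟩ => ⟨s, hs, hP.oFinite_of_le_one hle⟩
  tfae_have 1 → 4 := fun h =>
    let ⟨s', hs', hlt⟩ := h.exists_op_right_lt_one
    ⟨s', hs', hlt.le⟩
  tfae_have 4 → 5 := fun ⟨s', hs', hle⟩ => ⟨s', hs', hP.oFinite_of_le_one hle⟩
  tfae_have 5 → 1 := fun ⟨s', hs', h⟩ => h.of_op_right hs'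
  tfae_finish
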